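/- There is no odd deficient-perfect number of the form n = 3^{α1} · 7^{α2} · 19^{α3} · p^{α4} with deficient divisor d satisfying n/d ≥ 7, where p is a prime with p > 19 and α1, α2, α3, α4 are positive integers. That is, no such n admits a proper divisor d with σ(n) = 2n - d and n/d ≥ 7. -/

import Mathlib

open Finset

-- A: geometric identity
lemma geom_id (q m : ℕ) (hq : 1 ≤ q) : (q - 1) * (∑ i ∈ range m, q ^ i) + 1 = q ^ m := by
  induction m with
  | zero => simp
  | succ m ih =>
    rw [sum_range_succ, Nat.mul_add, add_right_comm, ih, pow_succ]
    have h1 : 1 + (q - 1) = q := by omega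
    calc q ^ m + (q - 1) * q ^ m = (1 + (q - 1)) * q ^ m := by ring
    _ = q ^ m * q := by rw [h1]; ring

-- B: parity
lemma geom_parity (q m : ℕ) (hq : Odd q) : (∑ i ∈ range m, q ^ i) % 2 = m % 2 := by
  induction m with
  | zero => simp
  | succ m ih =>
    rw [sum_range_succ]
    have h2 : q ^ m % 2 = 1 := Nat.odd_iff.mp hq.pow
    omega

-- C: dvd of geometric sums
lemma geom_dvd (q k m : ℕ) (h : k ∣ m) :
    (∑ i ∈ range k, q ^ i) ∣ (∑ i ∈ range m, q ^ i) := by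
  obtain ⟨t, rfl⟩ := h
  induction t with
  | zero => simp
  | succ t ih =>
    rw [Nat.mul_succ, Finset.sum_range_add]
    have h2 : ∑ x ∈ range k, q ^ (k * t + x) = q ^ (k * t) * ∑ x ∈ range k, q ^ x := by
      rw [Finset.mul_sum]
      simp [pow_add]
    rw [h2]
    exact dvd_add ih (Dvd.dvd.mul_left dvd_rfl _)

-- positivity of geometric sum
lemma geom_pos (q m : ℕ) (hq : 1 ≤ q) (hm : 1 ≤ m) : 1 ≤ ∑ i ∈ range m, q ^ i := by
  obtain ⟨m', rfl⟩ : ∃ m', m = m' + 1 := ⟨m - 1, by omega⟩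
  rw [Finset.sum_range_succ']
  simp

-- geometric sum bigger than number of terms (for q ≥ 2, m ≥ 2)
lemma geom_gt (q m : ℕ) (hq : 2 ≤ q) (hm : 2 ≤ m) : m < ∑ i ∈ range m, q ^ i := by
  have : ∑ _i ∈ range m, 1 < ∑ i ∈ range m, q ^ i := by
    apply Finset.sum_lt_sum
    · intro i _; exact Nat.one_le_pow _ _ (by omega)
    · exact ⟨1, Finset.mem_range.mpr (by omega), by simpa using (by omega : 1 < q)⟩
  simpa using this

-- p does not divide the geometric sum
lemma geom_not_dvd (q m : ℕ) (hq : 2 ≤ q) (hm : 1 ≤ m) : ¬ q ∣ ∑ i ∈ range m, q ^ i := by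
  intro h
  obtain ⟨m', rfl⟩ : ∃ m', m = m' + 1 := ⟨m - 1, by omega⟩
  rw [Finset.sum_range_succ'] at h
  simp only [pow_zero] at h
  have h2 : q ∣ ∑ i ∈ range m', q ^ (i + 1) := by
    apply Finset.dvd_sum
    intro i _
    exact ⟨q ^ i, by ring⟩
  have := (Nat.dvd_add_right h2).mp h
  exact absurd (Nat.le_of_dvd one_pos this) (by omega)

-- D: classification of prime divisors of geometric sums
lemma classify (p q r : ℕ) (hq : q.Prime) (hr : r.Prime)
    (hdvd : q ∣ ∑ i ∈ range r, p ^ i) :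
    r ∣ q - 1 ∨ (q = r ∧ p % q = 1) := by
  haveI := Fact.mk hq
  have hx : (∑ i ∈ range r, (p : ZMod q) ^ i) = 0 := by
    have h0 : ((∑ i ∈ range r, p ^ i : ℕ) : ZMod q) = 0 :=
      (ZMod.natCast_eq_zero_iff _ _).mpr hdvd
    push_cast at h0
    exact h0
  by_cases h1 : (p : ZMod q) = 1
  · right
    have hsum : (∑ i ∈ range r, (p : ZMod q) ^ i) = (r : ZMod q) := by simp [h1]
    have hr0 : (r : ZMod q) = 0 := by rw [← hsum]; exact hx
    have hqr : q ∣ r := (ZMod.natCast_eq_zero_iff _ _).mp hr0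
    have hqer : q = r := (Nat.prime_dvd_prime_iff_eq hq hr).mp hqr
    refine ⟨hqer, ?_⟩
    have h2 : (p : ZMod q) = ((1 : ℕ) : ZMod q) := by simpa using h1
    have h3 := (ZMod.natCast_eq_natCast_iff _ _ _).mp h2
    have hq2 := hq.two_le
    simpa [Nat.ModEq, Nat.mod_eq_of_lt hq.one_lt] using h3
  · left
    have hx0 : (p : ZMod q) ≠ 0 := by
      intro h0
      rw [h0] at hx
      have hr2 := hr.two_le
      obtain ⟨r', rfl⟩ : ∃ r', r = r' + 1 := ⟨r - 1, by omega⟩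
      rw [Finset.sum_range_succ'] at hx
      simp at hx
    have hxr : (p : ZMod q) ^ r = 1 := by
      have hgs := geom_sum_mul (p : ZMod q) r
      rw [hx, zero_mul] at hgs
      have := sub_eq_zero.mp hgs.symm
      exact this
    have hord : orderOf (p : ZMod q) ∣ r := orderOf_dvd_of_pow_eq_one hxr
    rcases (Nat.Prime.eq_one_or_self_of_dvd hr _ hord) with h | h
    · exact absurd (orderOf_eq_one_iff.mp h) h1
    · rw [← h]
      exact orderOf_dvd_of_pow_eq_one (ZMod.pow_card_sub_one_eq_one hx0)

-- helper: (1+x)^i = 1 + i*x when x*x = 0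
lemma one_add_pow {R : Type*} [CommRing R] (x : R) (hx : x * x = 0) (i : ℕ) :
    (1 + x) ^ i = 1 + (i : R) * x := by
  induction i with
  | zero => simp
  | succ i ih =>
    rw [pow_succ, ih]
    calc (1 + (i : R) * x) * (1 + x) = 1 + ((i : R) + 1) * x + (i : R) * (x * x) := by ring
    _ = 1 + ((i + 1 : ℕ) : R) * x := by rw [hx]; push_cast; ring

-- E: r^2 does not divide the geometric sum when p ≡ 1 mod r, r odd ≥ 3
lemma not_sq_dvd (p r : ℕ) (hr : 3 ≤ r) (hrodd : Odd r) (h1 : p % r = 1) :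
    ¬ (r ^ 2 ∣ ∑ i ∈ range r, p ^ i) := by
  intro hdvd
  have hdm := Nat.div_add_mod p r
  obtain ⟨u, hu⟩ : ∃ u, p = 1 + r * u := ⟨p / r, by omega⟩
  obtain ⟨v, hv⟩ := hrodd
  set R := ZMod (r ^ 2)
  have hxx : ((r * u : ℕ) : R) * ((r * u : ℕ) : R) = 0 := by
    rw [← Nat.cast_mul, ZMod.natCast_eq_zero_iff]
    exact ⟨u * u, by ring⟩
  have hcast : ((∑ i ∈ range r, p ^ i : ℕ) : R) = (r : R) := by
    rw [Nat.cast_sum]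
    simp only [Nat.cast_pow]
    have hp' : (p : R) = 1 + ((r * u : ℕ) : R) := by rw [hu]; push_cast; ring
    rw [hp']
    have hsum : ∑ i ∈ range r, (1 + ((r * u : ℕ) : R)) ^ i
        = ∑ i ∈ range r, (1 + (i : R) * ((r * u : ℕ) : R)) := by
      apply Finset.sum_congr rfl
      intro i _
      exact one_add_pow _ hxx i
    rw [hsum, Finset.sum_add_distrib, Finset.sum_const, Finset.card_range]
    have hs2 : (∑ i ∈ range r, i) * 2 = r * (r - 1) := Finset.sum_range_id_mul_two r
    have hsrv : (∑ i ∈ range r, i) = r * v := by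
      have h3 : r - 1 = 2 * v := by omega
      rw [h3] at hs2
      have h4 : r * (2 * v) = r * v * 2 := by ring
      rw [h4] at hs2
      omega
    have hsum2 : ∑ i ∈ range r, (i : R) * ((r * u : ℕ) : R)
        = ((∑ i ∈ range r, i : ℕ) : R) * ((r * u : ℕ) : R) := by
      rw [Nat.cast_sum, Finset.sum_mul]
    rw [hsum2, hsrv]
    have : ((r * v : ℕ) : R) * ((r * u : ℕ) : R) = 0 := by
      rw [← Nat.cast_mul, ZMod.natCast_eq_zero_iff]
      exact ⟨v * u, by ring⟩
    rw [this]
    simp [mul_comm]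
  have hT0 : ((∑ i ∈ range r, p ^ i : ℕ) : R) = 0 :=
    (ZMod.natCast_eq_zero_iff _ _).mpr hdvd
  rw [hT0] at hcast
  have : r ^ 2 ∣ r := (ZMod.natCast_eq_zero_iff _ _).mp hcast.symm
  have := Nat.le_of_dvd (by omega) this
  nlinarith

-- F: witness table
lemma key_table (p : ℕ) (hp : p.Prime) (h1 : 19 < p) (h2 : p ≤ 187) :
    ∃ q, q.Prime ∧ q ∣ (1 + p + p ^ 2) ∧ q ≠ 3 ∧ q ≠ 7 ∧ q ≠ 13 ∧ q ≠ 17 ∧ q ≠ 19 := by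
  interval_cases p
  · exact absurd hp (by norm_num)
  · exact absurd hp (by norm_num)
  · exact absurd hp (by norm_num)
  · exact ⟨79, by norm_num⟩
  · exact absurd hp (by norm_num)
  · exact absurd hp (by norm_num)
  · exact absurd hp (by norm_num)
  · exact absurd hp (by norm_num)
  · exact absurd hp (by norm_num)
  · exact ⟨67, by norm_num⟩
  · exact absurd hp (by norm_num)
  · exact ⟨331, by norm_num⟩
  · exact absurd hp (by norm_num)
  · exact absurd hp (by norm_num)
  · exact absurd hp (by norm_num)
  · exact absurd hp (by norm_num)
  · exact absurd hp (by norm_num)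
  · exact ⟨67, by norm_num⟩
  · exact absurd hp (by norm_num)
  · exact absurd hp (by norm_num)
  · exact absurd hp (by norm_num)
  · exact ⟨1723, by norm_num⟩
  · exact absurd hp (by norm_num)
  · exact ⟨631, by norm_num⟩
  · exact absurd hp (by norm_num)
  · exact absurd hp (by norm_num)
  · exact absurd hp (by norm_num)
  · exact ⟨37, by norm_num⟩
  · exact absurd hp (by norm_num)
  · exact absurd hp (by norm_num)
  · exact absurd hp (by norm_num)
  · exact absurd hp (by norm_num)
  · exact absurd hp (by norm_num)
  · exact ⟨409, by norm_num⟩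
  · exact absurd hp (by norm_num)
  · exact absurd hp (by norm_num)
  · exact absurd hp (by norm_num)
  · exact absurd hp (by norm_num)
  · exact absurd hp (by norm_num)
  · exact ⟨3541, by norm_num⟩
  · exact absurd hp (by norm_num)
  · exact ⟨97, by norm_num⟩
  · exact absurd hp (by norm_num)
  · exact absurd hp (by norm_num)
  · exact absurd hp (by norm_num)
  · exact absurd hp (by norm_num)
  · exact absurd hp (by norm_num)
  · exact ⟨31, by norm_num⟩
  · exact absurd hp (by norm_num)
  · exact absurd hp (by norm_num)
  · exact absurd hp (by norm_num)
  · exact ⟨5113, by norm_num⟩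
  · exact absurd hp (by norm_num)
  · exact ⟨1801, by norm_num⟩
  · exact absurd hp (by norm_num)
  · exact absurd hp (by norm_num)
  · exact absurd hp (by norm_num)
  · exact absurd hp (by norm_num)
  · exact absurd hp (by norm_num)
  · exact ⟨43, by norm_num⟩
  · exact absurd hp (by norm_num)
  · exact absurd hp (by norm_num)
  · exact absurd hp (by norm_num)
  · exact ⟨367, by norm_num⟩
  · exact absurd hp (by norm_num)
  · exact absurd hp (by norm_num)
  · exact absurd hp (by norm_num)
  · exact absurd hp (by norm_num)
  · exact absurd hp (by norm_num)
  · exact ⟨8011, by norm_num⟩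
  · exact absurd hp (by norm_num)
  · exact absurd hp (by norm_num)
  · exact absurd hp (by norm_num)
  · exact absurd hp (by norm_num)
  · exact absurd hp (by norm_num)
  · exact absurd hp (by norm_num)
  · exact absurd hp (by norm_num)
  · exact ⟨3169, by norm_num⟩
  · exact absurd hp (by norm_num)
  · exact absurd hp (by norm_num)
  · exact absurd hp (by norm_num)
  · exact ⟨10303, by norm_num⟩
  · exact absurd hp (by norm_num)
  · exact ⟨3571, by norm_num⟩
  · exact absurd hp (by norm_num)
  · exact absurd hp (by norm_num)
  · exact absurd hp (by norm_num)
  · exact ⟨127, by norm_num⟩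
  · exact absurd hp (by norm_num)
  · exact ⟨571, by norm_num⟩
  · exact absurd hp (by norm_num)
  · exact absurd hp (by norm_num)
  · exact absurd hp (by norm_num)
  · exact ⟨991, by norm_num⟩
  · exact absurd hp (by norm_num)
  · exact absurd hp (by norm_num)
  · exact absurd hp (by norm_num)
  · exact absurd hp (by norm_num)
  · exact absurd hp (by norm_num)
  · exact absurd hp (by norm_num)
  · exact absurd hp (by norm_num)
  · exact absurd hp (by norm_num)
  · exact absurd hp (by norm_num)
  · exact absurd hp (by norm_num)
  · exact absurd hp (by norm_num)
  · exact absurd hp (by norm_num)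
  · exact absurd hp (by norm_num)
  · exact ⟨5419, by norm_num⟩
  · exact absurd hp (by norm_num)
  · exact absurd hp (by norm_num)
  · exact absurd hp (by norm_num)
  · exact ⟨17293, by norm_num⟩
  · exact absurd hp (by norm_num)
  · exact absurd hp (by norm_num)
  · exact absurd hp (by norm_num)
  · exact absurd hp (by norm_num)
  · exact absurd hp (by norm_num)
  · exact ⟨37, by norm_num⟩
  · exact absurd hp (by norm_num)
  · exact ⟨499, by norm_num⟩
  · exact absurd hp (by norm_num)
  · exact absurd hp (by norm_num)
  · exact absurd hp (by norm_num)
  · exact absurd hp (by norm_num)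
  · exact absurd hp (by norm_num)
  · exact absurd hp (by norm_num)
  · exact absurd hp (by norm_num)
  · exact absurd hp (by norm_num)
  · exact absurd hp (by norm_num)
  · exact ⟨31, by norm_num⟩
  · exact absurd hp (by norm_num)
  · exact ⟨1093, by norm_num⟩
  · exact absurd hp (by norm_num)
  · exact absurd hp (by norm_num)
  · exact absurd hp (by norm_num)
  · exact absurd hp (by norm_num)
  · exact absurd hp (by norm_num)
  · exact ⟨8269, by norm_num⟩
  · exact absurd hp (by norm_num)
  · exact absurd hp (by norm_num)
  · exact absurd hp (by norm_num)
  · exact absurd hp (by norm_num)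
  · exact absurd hp (by norm_num)
  · exact ⟨67, by norm_num⟩
  · exact absurd hp (by norm_num)
  · exact absurd hp (by norm_num)
  · exact absurd hp (by norm_num)
  · exact ⟨28057, by norm_num⟩
  · exact absurd hp (by norm_num)
  · exact absurd hp (by norm_num)
  · exact absurd hp (by norm_num)
  · exact absurd hp (by norm_num)
  · exact absurd hp (by norm_num)
  · exact ⟨30103, by norm_num⟩
  · exact absurd hp (by norm_num)
  · exact absurd hp (by norm_num)
  · exact absurd hp (by norm_num)
  · exact absurd hp (by norm_num)
  · exact absurd hp (by norm_num)
  · exact ⟨4603, by norm_num⟩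
  · exact absurd hp (by norm_num)
  · exact ⟨79, by norm_num⟩
  · exact absurd hp (by norm_num)
  · exact absurd hp (by norm_num)
  · exact absurd hp (by norm_num)
  · exact absurd hp (by norm_num)
  · exact absurd hp (by norm_num)
  · exact absurd hp (by norm_num)

lemma bound_lemma (P DD : ℕ)
    (h : 216 * ((P + 22) * (2 * DD + 13)) < 399 * ((P + 23) * (DD + 7))) :
    DD ≤ 7 ∧ P ≤ 164 := by
  have e1 : 216 * ((P + 22) * (2 * DD + 13)) = 432 * (P * DD) + 2808 * P + 9504 * DD + 61776 := by
    ring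
  have e2 : 399 * ((P + 23) * (DD + 7)) = 399 * (P * DD) + 2793 * P + 9177 * DD + 64239 := by
    ring
  rw [e1, e2] at h
  generalize P * DD = M at h
  omega

lemma r_eq_three (r m : ℕ) (hrprime : r.Prime) (hrodd : r % 2 = 1) (h : r ∣ m)
    (hm : m = 2 ∨ m = 6 ∨ m = 12 ∨ m = 16 ∨ m = 18) : r = 3 := by
  have hr2 := hrprime.two_le
  have hle : r ≤ 18 := by
    have := Nat.le_of_dvd (by omega) h
    omega
  interval_cases r <;> rcases hm with rfl | rfl | rfl | rfl | rfl <;>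
    first
      | rfl
      | omega
      | exact absurd hrprime (by norm_num)

set_option maxHeartbeats 1000000 in
theorem stmt15 (p : ℕ) (hp : p.Prime) (hpq : 19 < p)
    (α₁ α₂ α₃ α₄ : ℕ) (hα₁ : 0 < α₁) (hα₂ : 0 < α₂) (hα₃ : 0 < α₃) (hα₄ : 0 < α₄)
    (n : ℕ) (hn : n = 3 ^ α₁ * 7 ^ α₂ * 19 ^ α₃ * p ^ α₄)
    (hodd : Odd n)
    (d : ℕ) (hdvd : d ∣ n) (hlt : d < n)
    (hσ : ArithmeticFunction.sigma 1 n = 2 * n - d)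
    (hD : 7 ≤ n / d) :
    False := by
  have hp23 : 23 ≤ p := by
    by_contra h
    push_neg at h
    interval_cases p <;> norm_num at hp
  have h3p : Nat.Prime 3 := by norm_num
  have h7p : Nat.Prime 7 := by norm_num
  have h19p : Nat.Prime 19 := by norm_num
  have hn0 : 0 < n := by rw [hn]; positivity
  have hd0 : 0 < d := by
    rcases Nat.eq_zero_or_pos d with h | h
    · subst h; rw [zero_dvd_iff] at hdvd; omega
    · exact h
  set D := n / d with hDdef
  have hdD : d * D = n := Nat.mul_div_cancel' hdvd
  have hDdvdN : D ∣ n := ⟨d, by rw [← hdD]; ring⟩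
  set σn := ArithmeticFunction.sigma 1 n with hσdef
  set S3 := ∑ i ∈ Finset.range (α₁ + 1), 3 ^ i with hS3def
  set S7 := ∑ i ∈ Finset.range (α₂ + 1), 7 ^ i with hS7def
  set S19 := ∑ i ∈ Finset.range (α₃ + 1), 19 ^ i with hS19def
  set Sp := ∑ i ∈ Finset.range (α₄ + 1), p ^ i with hSpdef
  -- multiplicativity
  have hpne3 : p ≠ 3 := by omega
  have hpne7 : p ≠ 7 := by omega
  have hpne19 : p ≠ 19 := by omega
  have hco197 : Nat.Coprime (19 ^ α₃) (p ^ α₄) :=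
    ((Nat.coprime_primes h19p hp).mpr (by omega)).pow _ _
  have hco7 : Nat.Coprime (7 ^ α₂) (19 ^ α₃ * p ^ α₄) :=
    Nat.Coprime.mul_right (((Nat.coprime_primes h7p h19p).mpr (by norm_num)).pow _ _)
      (((Nat.coprime_primes h7p hp).mpr (by omega)).pow _ _)
  have hco3 : Nat.Coprime (3 ^ α₁) (7 ^ α₂ * (19 ^ α₃ * p ^ α₄)) := by
    refine Nat.Coprime.mul_right (((Nat.coprime_primes h3p h7p).mpr (by norm_num)).pow _ _) ?_
    exact Nat.Coprime.mul_right (((Nat.coprime_primes h3p h19p).mpr (by norm_num)).pow _ _)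
      (((Nat.coprime_primes h3p hp).mpr (by omega)).pow _ _)
  have hmul : σn = S3 * (S7 * (S19 * Sp)) := by
    rw [hσdef, hn, show (3:ℕ) ^ α₁ * 7 ^ α₂ * 19 ^ α₃ * p ^ α₄
        = 3 ^ α₁ * (7 ^ α₂ * (19 ^ α₃ * p ^ α₄)) by ring,
      ArithmeticFunction.isMultiplicative_sigma.map_mul_of_coprime hco3,
      ArithmeticFunction.isMultiplicative_sigma.map_mul_of_coprime hco7,
      ArithmeticFunction.isMultiplicative_sigma.map_mul_of_coprime hco197,
      ArithmeticFunction.sigma_one_apply_prime_pow h3p,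
      ArithmeticFunction.sigma_one_apply_prime_pow h7p,
      ArithmeticFunction.sigma_one_apply_prime_pow h19p,
      ArithmeticFunction.sigma_one_apply_prime_pow hp]
  -- key equation
  have hσ2 : σn + d = 2 * n := by omega
  have hkey : D * σn = (2 * D - 1) * n := by
    zify [show (1:ℕ) ≤ 2 * D by omega]
    have h1 : (σn : ℤ) + d = 2 * n := by exact_mod_cast hσ2
    have h2 : (d : ℤ) * D = n := by exact_mod_cast hdD
    linear_combination (D : ℤ) * h1 - h2
  -- parity
  have hdodd : d % 2 = 1 := by
    obtain ⟨k, hk⟩ := hdvd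
    rw [Nat.odd_iff] at hodd
    rcases Nat.even_or_odd d with he | ho
    · exfalso
      have : Even n := by rw [hk]; exact he.mul_right k
      rw [Nat.even_iff] at this; omega
    · exact Nat.odd_iff.mp ho
  have hσodd : σn % 2 = 1 := by omega
  have hSpodd : Sp % 2 = 1 := by
    have h1 : Odd (S3 * (S7 * (S19 * Sp))) := by rw [← hmul]; exact Nat.odd_iff.mpr hσodd
    rw [Nat.odd_mul, Nat.odd_mul, Nat.odd_mul] at h1
    exact Nat.odd_iff.mp h1.2.2.2
  have hα₄even : α₄ % 2 = 0 := by
    have hpodd : Odd p := hp.odd_of_ne_two (by omega)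
    have := geom_parity p (α₄ + 1) hpodd
    rw [← hSpdef] at this
    omega
  -- geometric identities
  have hg3 : 2 * S3 + 1 = 3 ^ (α₁ + 1) := by
    have := geom_id 3 (α₁ + 1) (by norm_num); rw [← hS3def] at this; omega
  have hg7 : 6 * S7 + 1 = 7 ^ (α₂ + 1) := by
    have := geom_id 7 (α₂ + 1) (by norm_num); rw [← hS7def] at this; omega
  have hg19 : 18 * S19 + 1 = 19 ^ (α₃ + 1) := by
    have := geom_id 19 (α₃ + 1) (by norm_num); rw [← hS19def] at this; omega
  have hgp : (p - 1) * Sp + 1 = p ^ (α₄ + 1) := by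
    have := geom_id p (α₄ + 1) (by omega); rw [← hSpdef] at this; omega
  -- size bound
  have hlt1 : 216 * ((p - 1) * σn) < 399 * (p * n) := by
    have e1 : 216 * ((p - 1) * σn) = (2 * S3) * ((6 * S7) * ((18 * S19) * ((p - 1) * Sp))) := by
      rw [hmul]; ring
    have e2 : 399 * (p * n) = 3 ^ (α₁ + 1) * (7 ^ (α₂ + 1) * (19 ^ (α₃ + 1) * p ^ (α₄ + 1))) := by
      rw [hn]; ring
    rw [e1, e2]
    have l3 : 2 * S3 < 3 ^ (α₁ + 1) := by omega
    have l7 : 6 * S7 < 7 ^ (α₂ + 1) := by omega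
    have l19 : 18 * S19 < 19 ^ (α₃ + 1) := by omega
    have lp : (p - 1) * Sp < p ^ (α₄ + 1) := by omega
    exact mul_lt_mul'' l3 (mul_lt_mul'' l7 (mul_lt_mul'' l19 lp (by omega) (by omega))
      (by omega) (by omega)) (by omega) (by omega)
  have hlt2 : (216 * ((p - 1) * (2 * D - 1))) * n < (399 * (p * D)) * n := by
    calc (216 * ((p - 1) * (2 * D - 1))) * n = 216 * ((p - 1) * ((2 * D - 1) * n)) := by ring
    _ = 216 * ((p - 1) * (D * σn)) := by rw [hkey]
    _ = D * (216 * ((p - 1) * σn)) := by ring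
    _ < D * (399 * (p * n)) := by
        exact mul_lt_mul_of_pos_left hlt1 (show 0 < D by omega)
    _ = (399 * (p * D)) * n := by ring
  have hsz : 216 * ((p - 1) * (2 * D - 1)) < 399 * (p * D) := Nat.lt_of_mul_lt_mul_right hlt2
  -- bounds on D and p
  obtain ⟨P, hPe⟩ : ∃ P, p = P + 23 := ⟨p - 23, by omega⟩
  obtain ⟨DD, hDDe⟩ : ∃ DD, D = DD + 7 := ⟨D - 7, by omega⟩
  rw [hPe, hDDe] at hsz
  have hsz' : 216 * ((P + 22) * (2 * DD + 13)) < 399 * ((P + 23) * (DD + 7)) := by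
    have : P + 23 - 1 = P + 22 := by omega
    rw [this] at hsz
    have : 2 * (DD + 7) - 1 = 2 * DD + 13 := by omega
    rw [this] at hsz
    exact hsz
  obtain ⟨hDD7, hP164⟩ := bound_lemma P DD hsz'
  have hD14 : D ≤ 14 := by omega
  have hp187 : p ≤ 187 := by omega
  clear hsz hsz' hDD7 hP164 hlt1 hlt2
  -- D odd
  have hDodd : D % 2 = 1 := by
    obtain ⟨k, hk⟩ := hDdvdN
    rw [Nat.odd_iff] at hodd
    rcases Nat.even_or_odd D with he | ho
    · exfalso
      have : Even n := by rw [hk]; exact he.mul_right k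
      rw [Nat.even_iff] at this; omega
    · exact Nat.odd_iff.mp ho
  -- prime factors of n
  have prime_n : ∀ q : ℕ, q.Prime → q ∣ n → q = 3 ∨ q = 7 ∨ q = 19 ∨ q = p := by
    intro q hq hqn
    rw [hn] at hqn
    rcases (Nat.Prime.dvd_mul hq).mp hqn with h | h
    · rcases (Nat.Prime.dvd_mul hq).mp h with h' | h'
      · rcases (Nat.Prime.dvd_mul hq).mp h' with h'' | h''
        · exact Or.inl ((Nat.prime_dvd_prime_iff_eq hq h3p).mp (hq.dvd_of_dvd_pow h''))
        · exact Or.inr (Or.inl ((Nat.prime_dvd_prime_iff_eq hq h7p).mp (hq.dvd_of_dvd_pow h'')))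
      · exact Or.inr (Or.inr (Or.inl ((Nat.prime_dvd_prime_iff_eq hq h19p).mp (hq.dvd_of_dvd_pow h'))))
    · exact Or.inr (Or.inr (Or.inr ((Nat.prime_dvd_prime_iff_eq hq hp).mp (hq.dvd_of_dvd_pow h))))
  -- D ∈ {7, 9}
  have hD79 : D = 7 ∨ D = 9 := by
    rcases (show D = 7 ∨ D = 9 ∨ D = 11 ∨ D = 13 by omega) with h | h | h | h
    · exact Or.inl h
    · exact Or.inr h
    · exfalso
      rcases prime_n 11 (by norm_num) (h ▸ hDdvdN) with h' | h' | h' | h' <;> omega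
    · exfalso
      rcases prime_n 13 (by norm_num) (h ▸ hDdvdN) with h' | h' | h' | h' <;> omega
  -- the minimal odd prime factor r of α₄ + 1
  set r := (α₄ + 1).minFac with hrdef
  have hrprime : r.Prime := Nat.minFac_prime (by omega)
  have hrdvd : r ∣ α₄ + 1 := Nat.minFac_dvd _
  have hr2 : 2 ≤ r := hrprime.two_le
  have hrodd : r % 2 = 1 := by
    rcases Nat.even_or_odd r with he | ho
    · exfalso
      have h2r : 2 ∣ r := he.two_dvd
      have : 2 ∣ α₄ + 1 := h2r.trans hrdvd
      omega
    · exact Nat.odd_iff.mp ho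
  set Tr := ∑ i ∈ Finset.range r, p ^ i with hTrdef
  have hTrSp : Tr ∣ Sp := geom_dvd p r (α₄ + 1) hrdvd
  have hTrσ : Tr ∣ σn := by
    rw [hmul]
    exact Dvd.dvd.mul_left (Dvd.dvd.mul_left (hTrSp.trans (dvd_mul_left Sp S19)) S7) S3
  have hTrgt : r < Tr := geom_gt p r (by omega) hr2
  -- classification of prime divisors of Tr
  have hqmem : ∀ q : ℕ, q.Prime → q ∣ Tr → q = 3 ∨ q = 7 ∨ q = 13 ∨ q = 17 ∨ q = 19 := by
    intro q hq hqTr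
    have h1 : q ∣ (2 * D - 1) * n := by
      rw [← hkey]
      exact Dvd.dvd.mul_left (hqTr.trans hTrσ) D
    rcases (Nat.Prime.dvd_mul hq).mp h1 with h2 | h2
    · rcases hD79 with h7' | h9'
      · rw [h7'] at h2
        norm_num at h2
        have : q = 13 := (Nat.prime_dvd_prime_iff_eq hq (by norm_num)).mp h2
        omega
      · rw [h9'] at h2
        norm_num at h2
        have : q = 17 := (Nat.prime_dvd_prime_iff_eq hq (by norm_num)).mp h2
        omega
    · rcases prime_n q hq h2 with h3 | h3 | h3 | h3
      · omega
      · omega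
      · omega
      · exfalso
        rw [h3] at hqTr
        exact geom_not_dvd p r (by omega) (by omega) hqTr
  -- r = 3
  have hr3 : r = 3 := by
    by_contra hne
    have hall : ∀ q : ℕ, q.Prime → q ∣ Tr → q = r := by
      intro q hq hqTr
      rcases classify p q r hq hrprime hqTr with hcase | ⟨h, _⟩
      · exfalso
        rcases hqmem q hq hqTr with rfl | rfl | rfl | rfl | rfl
        · exact hne (r_eq_three r (3 - 1) hrprime hrodd hcase (by norm_num))
        · exact hne (r_eq_three r (7 - 1) hrprime hrodd hcase (by norm_num))
        · exact hne (r_eq_three r (13 - 1) hrprime hrodd hcase (by norm_num))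
        · exact hne (r_eq_three r (17 - 1) hrprime hrodd hcase (by norm_num))
        · exact hne (r_eq_three r (19 - 1) hrprime hrodd hcase (by norm_num))
      · exact h
    have hTr0 : Tr ≠ 0 := by omega
    have hTreq : Tr = r ^ (Tr.primeFactorsList.length) := Nat.eq_prime_pow_of_unique_prime_dvd hTr0 (by
      intro q hq hqTr; exact hall q hq hqTr)
    -- p % r = 1
    have hminp : (Tr.minFac).Prime := Nat.minFac_prime (by omega)
    have hmindvd : Tr.minFac ∣ Tr := Nat.minFac_dvd Tr
    have hminr : Tr.minFac = r := hall _ hminp hmindvd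
    have hpmod : p % r = 1 := by
      have hrTr : r ∣ ∑ i ∈ Finset.range r, p ^ i := by
        rw [← hTrdef, ← hminr]; exact hmindvd
      rcases classify p r r hrprime hrprime hrTr with hc | ⟨_, h⟩
      · exact absurd (Nat.le_of_dvd (by omega) hc) (by omega)
      · exact h
    have hk1 : Tr.primeFactorsList.length ≤ 1 := by
      by_contra hk2
      push_neg at hk2
      have : r ^ 2 ∣ Tr := hTreq ▸ pow_dvd_pow r hk2
      exact not_sq_dvd p r (by omega) (Nat.odd_iff.mpr hrodd) hpmod this
    have : Tr ≤ r := by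
      calc Tr = r ^ (Tr.primeFactorsList.length) := hTreq
      _ ≤ r ^ 1 := Nat.pow_le_pow_right (by omega) hk1
      _ = r := pow_one r
    omega
  -- final contradiction via the witness prime
  obtain ⟨q0, hq0p, hq0dvd, h3ne, h7ne, h13ne, h17ne, h19ne⟩ := key_table p hp hpq hp187
  have hT3eq : (∑ i ∈ Finset.range 3, p ^ i) = 1 + p + p ^ 2 := by
    rw [Finset.sum_range_succ, Finset.sum_range_succ, Finset.sum_range_one]
    ring
  have hq0Tr : q0 ∣ Tr := by
    have hTr3 : Tr = 1 + p + p ^ 2 := by rw [hTrdef, hr3, hT3eq]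
    rw [hTr3]
    exact hq0dvd
  rcases hqmem q0 hq0p hq0Tr with h | h | h | h | h <;> omega
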